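/- Let β > 0, n an odd positive integer, ρ = √3/e, and αₙ the volume of the unit ball in ℝⁿ. For any positive even integer l, ∫_{ℝⁿ} |ξ|^l · (π/β)^{n/2} e^{-|ξ|²/(4β)} dξ ≤ π^{(n+1)/2}·n·αₙ·2^{(l+n+2)/2}·ρ^{(l+n-1)/2}·β^{l/2}·(l+n-1)^{(l+n-3)/2}·(2 + 1/e). -/

import Mathlib

/-!
In polar coordinates the integral becomes a one-dimensional Gamma integral: writing
`l + n = 2m + 1`, it equals `n αₙ π^{n/2} β^{l/2} 4^m Γ(m + 1/2)`. Log-convexity of `Γ` gives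
`Γ(m + 1/2) ≤ m!`, monotonicity of the Stirling sequence gives `m! ≤ e √m (m/e)^m`, and the
leftover factor `e m^{3/2}` is absorbed into `√(2π) (2 + 1/e) 3^{m/2}` via `m³ ≤ 4 · 3^m`.
-/

open Real MeasureTheory Module Metric

theorem Real.Gamma_add_half_le_Gamma_add_one {s : ℝ} (hs : 1 ≤ s) :
    Gamma (s + 1 / 2) ≤ Gamma (s + 1) := by
  have hs0 : 0 < s := by linarith
  have hΓ : 0 < Gamma (s + 1) := Gamma_pos_of_pos (by linarith)
  have hmono : Gamma s ≤ Gamma (s + 1) := by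
    rw [Gamma_add_one hs0.ne']
    exact le_mul_of_one_le_left (Gamma_pos_of_pos hs0).le hs
  calc Gamma (s + 1 / 2) = Gamma ((1 / 2) * s + (1 / 2) * (s + 1)) := by ring_nf
    _ ≤ Gamma s ^ (1 / 2 : ℝ) * Gamma (s + 1) ^ (1 / 2 : ℝ) :=
      Gamma_mul_add_mul_le_rpow_Gamma_mul_rpow_Gamma hs0 (by linarith) one_half_pos one_half_pos
        (by norm_num)
    _ ≤ Gamma (s + 1) ^ (1 / 2 : ℝ) * Gamma (s + 1) ^ (1 / 2 : ℝ) := by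
      gcongr
    _ = Gamma (s + 1) := by rw [← rpow_add hΓ]; norm_num

theorem Stirling.factorial_le_exp_one_mul_sqrt_mul_pow {n : ℕ} (hn : n ≠ 0) :
    (n.factorial : ℝ) ≤ exp 1 * √n * (n / exp 1) ^ n := by
  have hseq : stirlingSeq n ≤ exp 1 / √2 := by
    obtain ⟨k, rfl⟩ := Nat.exists_eq_succ_of_ne_zero hn
    rw [← stirlingSeq_one]
    exact stirlingSeq'_antitone (Nat.zero_le k)
  have hfac : (n.factorial : ℝ) = stirlingSeq n * (√2 * √n * (n / exp 1) ^ n) := by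
    rw [stirlingSeq, ← sqrt_mul zero_le_two]
    field_simp
  rw [hfac]
  calc stirlingSeq n * (√2 * √n * (n / exp 1) ^ n)
      ≤ exp 1 / √2 * (√2 * √n * (n / exp 1) ^ n) := by gcongr
    _ = exp 1 * √n * (n / exp 1) ^ n := by field_simp

theorem Nat.pow_three_le_four_mul_three_pow (m : ℕ) : m ^ 3 ≤ 4 * 3 ^ m := by
  induction m with
  | zero => norm_num
  | succ k ih =>
    rcases lt_or_ge k 3 with hk | hk
    · interval_cases k <;> norm_num
    · calc (k + 1) ^ 3 ≤ 3 * k ^ 3 := by nlinarith [Nat.mul_le_mul hk hk]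
        _ ≤ 3 * (4 * 3 ^ k) := Nat.mul_le_mul_left _ ih
        _ = 4 * 3 ^ (k + 1) := by ring

theorem sqrt_natCast_mul_self_le_two_mul_sqrt_three_pow (m : ℕ) :
    √(m : ℝ) * m ≤ 2 * √3 ^ m := by
  have hcube : (m : ℝ) ^ 3 ≤ 4 * 3 ^ m := by exact_mod_cast m.pow_three_le_four_mul_three_pow
  have hlhs : √((m : ℝ) ^ 3) = √(m : ℝ) * m := by
    rw [pow_succ, sqrt_mul (by positivity), sqrt_sq m.cast_nonneg, mul_comm]
  have hrhs : √(4 * 3 ^ m : ℝ) = 2 * √3 ^ m := by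
    rw [show (4 * 3 ^ m : ℝ) = (2 * √3 ^ m) ^ 2 by
      rw [mul_pow, ← pow_mul, mul_comm m, pow_mul, sq_sqrt zero_le_three]; norm_num]
    exact sqrt_sq (by positivity)
  rw [← hlhs, ← hrhs]
  exact sqrt_le_sqrt hcube

theorem two_mul_exp_one_le_sqrt_two_pi_mul : 2 * exp 1 ≤ √(2 * π) * (2 + 1 / exp 1) := by
  have hsqrt : (5 : ℝ) / 2 ≤ √(2 * π) := by
    rw [le_sqrt (by norm_num) (by positivity)]
    nlinarith [pi_gt_d2]
  have he := exp_one_lt_d9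
  have hinv : 1 / 2.7182818286 ≤ 1 / exp 1 := one_div_le_one_div_of_le (exp_pos 1) he.le
  nlinarith

theorem Real.Gamma_nat_add_half_le {m : ℕ} (hm : m ≠ 0) :
    Gamma (m + 1 / 2) ≤ √(2 * π) * (2 + 1 / exp 1) * (√3 / exp 1) ^ m * (m : ℝ) ^ (m - 1) := by
  have hpow : (m : ℝ) ^ m = m * (m : ℝ) ^ (m - 1) := by
    rw [← pow_succ', Nat.sub_add_cancel (Nat.one_le_iff_ne_zero.2 hm)]
  calc Gamma (m + 1 / 2) ≤ Gamma (m + 1) :=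
        Gamma_add_half_le_Gamma_add_one (Nat.one_le_cast.2 (Nat.one_le_iff_ne_zero.2 hm))
    _ = m.factorial := Gamma_nat_eq_factorial m
    _ ≤ exp 1 * √m * (m / exp 1) ^ m := Stirling.factorial_le_exp_one_mul_sqrt_mul_pow hm
    _ = exp 1 * (√m * m) * ((m : ℝ) ^ (m - 1) / exp 1 ^ m) := by rw [div_pow, hpow]; ring
    _ ≤ exp 1 * (2 * √3 ^ m) * ((m : ℝ) ^ (m - 1) / exp 1 ^ m) := by
        gcongr exp 1 * ?_ * _
        exact sqrt_natCast_mul_self_le_two_mul_sqrt_three_pow m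
    _ = 2 * exp 1 * (√3 / exp 1) ^ m * (m : ℝ) ^ (m - 1) := by rw [div_pow]; ring
    _ ≤ √(2 * π) * (2 + 1 / exp 1) * (√3 / exp 1) ^ m * (m : ℝ) ^ (m - 1) := by
        gcongr ?_ * _ * _
        exact two_mul_exp_one_le_sqrt_two_pi_mul

theorem two_pow_mul_Gamma_half_le {N : ℕ} (hN : Odd N) (h3 : 3 ≤ N) :
    2 ^ (N - 1) * Gamma (N / 2) ≤
      √π * 2 ^ (((N : ℝ) + 2) / 2) * (√3 / exp 1) ^ (((N : ℝ) - 1) / 2) *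
        ((N : ℝ) - 1) ^ (((N : ℝ) - 3) / 2) * (2 + 1 / exp 1) := by
  obtain ⟨m, rfl⟩ := hN
  have hm : m ≠ 0 := by omega
  have hN1 : ((2 * m + 1 : ℕ) : ℝ) - 1 = 2 * m := by push_cast; ring
  have h2 : (2 : ℝ) ^ ((((2 * m + 1 : ℕ) : ℝ) + 2) / 2) = 2 * 2 ^ m * √2 := by
    rw [show (((2 * m + 1 : ℕ) : ℝ) + 2) / 2 = 1 + m + 1 / 2 by push_cast; ring,
      rpow_add two_pos, rpow_add two_pos, rpow_one, rpow_natCast, sqrt_eq_rpow]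
  have hρ : (√3 / exp 1) ^ ((((2 * m + 1 : ℕ) : ℝ) - 1) / 2) = (√3 / exp 1) ^ m := by
    rw [hN1, mul_div_cancel_left₀ _ two_ne_zero, rpow_natCast]
  have hbase : (((2 * m + 1 : ℕ) : ℝ) - 1) ^ ((((2 * m + 1 : ℕ) : ℝ) - 3) / 2) =
      2 ^ (m - 1) * (m : ℝ) ^ (m - 1) := by
    rw [hN1, show (((2 * m + 1 : ℕ) : ℝ) - 3) / 2 = ((m - 1 : ℕ) : ℝ) by
      rw [Nat.cast_sub (by omega)]; push_cast; ring, rpow_natCast, mul_pow]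
  have h4 : (2 : ℝ) ^ (2 * m + 1 - 1) = 2 * 2 ^ m * 2 ^ (m - 1) := by
    rw [mul_assoc, ← pow_add, ← pow_succ']
    congr 1
    omega
  rw [h2, hρ, hbase, h4, show (((2 * m + 1 : ℕ) : ℝ) / 2) = m + 1 / 2 by push_cast; ring]
  calc 2 * 2 ^ m * 2 ^ (m - 1) * Gamma (m + 1 / 2)
      ≤ 2 * 2 ^ m * 2 ^ (m - 1) *
          (√(2 * π) * (2 + 1 / exp 1) * (√3 / exp 1) ^ m * (m : ℝ) ^ (m - 1)) := by
        gcongr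
        exact Gamma_nat_add_half_le hm
    _ = _ := by rw [sqrt_mul zero_le_two]; ring

section
variable {E : Type*} [NormedAddCommGroup E] [NormedSpace ℝ E] [FiniteDimensional ℝ E]
  [Nontrivial E] [MeasurableSpace E] [BorelSpace E] (μ : Measure E) [μ.IsAddHaarMeasure]

theorem integral_norm_pow_mul_exp_neg_mul_sq (k : ℕ) {b : ℝ} (hb : 0 < b) :
    ∫ x, ‖x‖ ^ k * exp (-b * ‖x‖ ^ 2) ∂μ =
      finrank ℝ E * μ.real (ball 0 1) *
        (b ^ (-((k + finrank ℝ E : ℕ) : ℝ) / 2) / 2 * Gamma ((k + finrank ℝ E : ℕ) / 2)) := by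
  have hd : 0 < finrank ℝ E := finrank_pos
  have hradial : ∫ y in Set.Ioi (0 : ℝ), y ^ (finrank ℝ E - 1) • (y ^ k * exp (-b * y ^ 2)) =
      ∫ y in Set.Ioi (0 : ℝ), y ^ ((k + finrank ℝ E - 1 : ℕ) : ℝ) * exp (-b * y ^ (2 : ℝ)) := by
    refine setIntegral_congr_fun measurableSet_Ioi fun y _ ↦ ?_
    rw [rpow_natCast, rpow_two, smul_eq_mul, ← mul_assoc, ← pow_add,
      show finrank ℝ E - 1 + k = k + finrank ℝ E - 1 by omega]
  rw [integral_fun_norm_addHaar μ fun r ↦ r ^ k * exp (-b * r ^ 2), hradial,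
    integral_rpow_mul_exp_neg_mul_rpow two_pos (neg_one_lt_zero.trans_le (Nat.cast_nonneg _)) hb,
    Nat.cast_sub (by omega), Nat.cast_one, sub_add_cancel, nsmul_eq_mul, smul_eq_mul]
  ring

theorem integral_norm_pow_mul_gaussian (k : ℕ) {β : ℝ} (hβ : 0 < β) :
    ∫ x, ‖x‖ ^ k * ((π / β) ^ ((finrank ℝ E : ℝ) / 2) * exp (-‖x‖ ^ 2 / (4 * β))) ∂μ =
      finrank ℝ E * μ.real (ball 0 1) * π ^ ((finrank ℝ E : ℝ) / 2) * β ^ ((k : ℝ) / 2) *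
        2 ^ (k + finrank ℝ E - 1) * Gamma ((k + finrank ℝ E : ℕ) / 2) := by
  have hd : 0 < finrank ℝ E := finrank_pos
  have h4β : 0 < 4 * β := by positivity
  have hintegrand :
      (fun x : E ↦ ‖x‖ ^ k * ((π / β) ^ ((finrank ℝ E : ℝ) / 2) * exp (-‖x‖ ^ 2 / (4 * β)))) =
        fun x ↦ (π / β) ^ ((finrank ℝ E : ℝ) / 2) * (‖x‖ ^ k * exp (-(4 * β)⁻¹ * ‖x‖ ^ 2)) := by
    ext x
    rw [neg_mul, inv_mul_eq_div, neg_div]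
    ring
  have hscale : (4 * β)⁻¹ ^ (-((k + finrank ℝ E : ℕ) : ℝ) / 2) =
      2 * 2 ^ (k + finrank ℝ E - 1) * β ^ ((k : ℝ) / 2) * β ^ ((finrank ℝ E : ℝ) / 2) := by
    rw [← pow_succ', Nat.sub_add_cancel (by omega),
      inv_rpow h4β.le, ← rpow_neg h4β.le, neg_div, neg_neg, mul_rpow zero_le_four hβ.le,
      mul_assoc, ← rpow_add hβ, show (4 : ℝ) = 2 ^ (2 : ℝ) by norm_num, ← rpow_mul zero_le_two,
      show 2 * (((k + finrank ℝ E : ℕ) : ℝ) / 2) = ((k + finrank ℝ E : ℕ) : ℝ) by ring,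
      rpow_natCast]
    push_cast
    ring_nf
  rw [hintegrand, integral_const_mul, integral_norm_pow_mul_exp_neg_mul_sq μ k (inv_pos.2 h4β),
    hscale, div_rpow pi_pos.le hβ.le]
  have : 0 < β ^ ((finrank ℝ E : ℝ) / 2) := by positivity
  field_simp
end

theorem gaussian_measure_moment_bound_odd_general (n l : ℕ) (hnodd : Odd n)
    (β : ℝ) (hβ : 0 < β) (hl : 0 < l) (hleven : Even l) :
    ∫ ξ : EuclideanSpace ℝ (Fin n),
        ‖ξ‖ ^ l * ((π / β) ^ ((n : ℝ) / 2) * Real.exp (-‖ξ‖ ^ 2 / (4 * β))) ≤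
      π ^ (((n : ℝ) + 1) / 2) * n *
        (volume (Metric.ball (0 : EuclideanSpace ℝ (Fin n)) 1)).toReal *
        (2 : ℝ) ^ (((l : ℝ) + n + 2) / 2) *
        (Real.sqrt 3 / Real.exp 1) ^ (((l : ℝ) + n - 1) / 2) *
        β ^ ((l : ℝ) / 2) *
        ((l : ℝ) + n - 1) ^ (((l : ℝ) + n - 3) / 2) *
        (2 + 1 / Real.exp 1) := by
  have : NeZero n := ⟨hnodd.pos.ne'⟩
  have hmoment := integral_norm_pow_mul_gaussian (volume : Measure (EuclideanSpace ℝ (Fin n))) l hβ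
  rw [finrank_euclideanSpace_fin] at hmoment
  have hthree : 3 ≤ l + n := by
    obtain ⟨b, rfl⟩ := hleven
    have := hnodd.pos
    omega
  have hGamma := two_pow_mul_Gamma_half_le (hleven.add_odd hnodd) hthree
  push_cast at hGamma
  rw [hmoment, measureReal_def, show ((n : ℝ) + 1) / 2 = n / 2 + 1 / 2 by ring,
    rpow_add pi_pos, ← sqrt_eq_rpow]
  calc _ = n * (volume (ball (0 : EuclideanSpace ℝ (Fin n)) 1)).toReal * π ^ ((n : ℝ) / 2) *
        β ^ ((l : ℝ) / 2) * (2 ^ (l + n - 1) * Gamma ((l + n : ℝ) / 2)) := by push_cast; ring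
    _ ≤ n * (volume (ball (0 : EuclideanSpace ℝ (Fin n)) 1)).toReal * π ^ ((n : ℝ) / 2) *
        β ^ ((l : ℝ) / 2) * (√π * 2 ^ (((l : ℝ) + n + 2) / 2) *
          (√3 / exp 1) ^ (((l : ℝ) + n - 1) / 2) * ((l : ℝ) + n - 1) ^ (((l : ℝ) + n - 3) / 2) *
          (2 + 1 / exp 1)) := by gcongr
    _ = _ := by ring

theorem gaussian_measure_moment_bound_odd (n l : ℕ) (hn : 0 < n) (hnodd : Odd n)
    (β : ℝ) (hβ : 0 < β) (hl : 0 < l) (hleven : Even l) :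
    ∫ ξ : EuclideanSpace ℝ (Fin n),
        ‖ξ‖ ^ l * ((π / β) ^ ((n : ℝ) / 2) * Real.exp (-‖ξ‖ ^ 2 / (4 * β))) ≤
      π ^ (((n : ℝ) + 1) / 2) * n *
        (volume (Metric.ball (0 : EuclideanSpace ℝ (Fin n)) 1)).toReal *
        (2 : ℝ) ^ (((l : ℝ) + n + 2) / 2) *
        (Real.sqrt 3 / Real.exp 1) ^ (((l : ℝ) + n - 1) / 2) *
        β ^ ((l : ℝ) / 2) *
        ((l : ℝ) + n - 1) ^ (((l : ℝ) + n - 3) / 2) *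
        (2 + 1 / Real.exp 1) :=
  gaussian_measure_moment_bound_odd_general n l hnodd β hβ hl hleven
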